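/- For n ≥ 1, let ℒ_n(z) = Σ_{X ∈ GF(2)^n, Y ∈ GF(2)^{n−1}} z^{rank(M_n^{X,Y})}, where M_n^{X,Y} is the n×n symmetric tridiagonal matrix over GF(2) with diagonal entries x_1, …, x_n and super/subdiagonal entries y_1, …, y_{n−1}. Then for n ≥ 3, ℒ_n(z) = (1 + 2z)·ℒ_{n−1}(z) + 4z²·ℒ_{n−2}(z), with ℒ_1(z) = 1 + z and ℒ_2(z) = 4z² + 3z + 1. -/
import Mathlib


open Polynomial

/-- The `n × n` symmetric tridiagonal matrix over GF(2) with diagonal `X` and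
super/subdiagonal entries `Y`. -/
def triMat (n : ℕ) (X : Fin n → ZMod 2) (Y : Fin (n - 1) → ZMod 2) :
    Matrix (Fin n) (Fin n) (ZMod 2) :=
  Matrix.of fun i j =>
    (if i = j then X i else 0) +
      ∑ k : Fin (n - 1),
        if ((i : ℕ) = k ∧ (j : ℕ) = k + 1) ∨ ((j : ℕ) = k ∧ (i : ℕ) = k + 1) then Y k else 0

/-- The rank-distribution polynomial
`ℒ_n(z) = ∑_{X ∈ GF(2)^n, Y ∈ GF(2)^{n-1}} z^{rank(M_n^{X,Y})}`. -/
noncomputable def LPoly (n : ℕ) : Polynomial ℤ :=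
  ∑ XD : Fin n → ZMod 2, ∑ Y : Fin (n - 1) → ZMod 2,
    (X : Polynomial ℤ) ^ (triMat n XD Y).rank

namespace TriAux
abbrev F := ZMod 2

lemma triMat_apply (n : ℕ) (X : Fin n → F) (Y : Fin (n-1) → F) (i j : Fin n) :
    triMat n X Y i j =
      if (i:ℕ) = (j:ℕ) then X i
      else if h : (i:ℕ)+1 = (j:ℕ) then Y ⟨i, by have := j.isLt; omega⟩
      else if h : (j:ℕ)+1 = (i:ℕ) then Y ⟨j, by have := i.isLt; omega⟩
      else 0 := by
  rw [triMat, Matrix.of_apply]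
  rcases eq_or_ne (i:ℕ) (j:ℕ) with hij | hij
  · have hij' : i = j := Fin.ext hij
    subst hij'
    rw [if_pos rfl, if_pos rfl, Finset.sum_eq_zero, add_zero]
    intro k _
    rw [if_neg]
    rintro (⟨h1, h2⟩ | ⟨h1, h2⟩) <;> omega
  · rw [if_neg (fun h => hij (by rw [h])), if_neg hij, zero_add]
    by_cases h1 : (i:ℕ)+1 = (j:ℕ)
    · rw [dif_pos h1, Finset.sum_eq_single (⟨(i:ℕ), by have := j.isLt; omega⟩ : Fin (n-1))]
      · rw [if_pos (Or.inl ⟨rfl, by simp; omega⟩)]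
      · intro k _ hk
        have hk' : (k:ℕ) ≠ (i:ℕ) := fun h => hk (Fin.ext h)
        rw [if_neg]
        rintro (⟨a, b⟩ | ⟨a, b⟩) <;> omega
      · intro h; exact absurd (Finset.mem_univ _) h
    · rw [dif_neg h1]
      by_cases h2 : (j:ℕ)+1 = (i:ℕ)
      · rw [dif_pos h2, Finset.sum_eq_single (⟨(j:ℕ), by have := i.isLt; omega⟩ : Fin (n-1))]
        · rw [if_pos (Or.inr ⟨rfl, by simp; omega⟩)]
        · intro k _ hk
          have hk' : (k:ℕ) ≠ (j:ℕ) := fun h => hk (Fin.ext h)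
          rw [if_neg]
          rintro (⟨a, b⟩ | ⟨a, b⟩) <;> omega
        · intro h; exact absurd (Finset.mem_univ _) h
      · rw [dif_neg h2, Finset.sum_eq_zero]
        intro k _
        rw [if_neg]
        rintro (⟨a, b⟩ | ⟨a, b⟩) <;> omega


/-- transfer state: (d, e, Kc) -/
def stStep (s : F × F × ℕ) (x y : F) : F × F × ℕ :=
  if y = 0 then (x, 1, s.2.2 + if s.1 = 0 then 1 else 0)
  else (x * s.1 + s.2.1, s.1, s.2.2)

def st : (n : ℕ) → (Fin (n+1) → F) → (Fin n → F) → F × F × ℕ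
  | 0, X, _ => (X 0, 1, 0)
  | n+1, X, Y => stStep (st n (Fin.init X) (Fin.init Y)) (X (Fin.last (n+1))) (Y (Fin.last n))

def nul (s : F × F × ℕ) : ℕ := s.2.2 + if s.1 = 0 then 1 else 0

section Step
variable {n : ℕ} (X : Fin (n+2) → F) (Y : Fin (n+1) → F) (c : Fin (n+2) → F)

lemma mulVec_castSucc (i : Fin (n+1)) :
    (triMat (n+2) X Y).mulVec c i.castSucc =
      (triMat (n+1) (Fin.init X) (Fin.init Y)).mulVec (Fin.init c) i
        + (if i = Fin.last n then Y (Fin.last n) * c (Fin.last (n+1)) else 0) := by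
  unfold Matrix.mulVec dotProduct
  beta_reduce
  rw [Fin.sum_univ_castSucc]
  congr 1
  · apply Finset.sum_congr rfl
    intro j _
    have : (Fin.init c) j = c j.castSucc := rfl
    rw [this]
    congr 1
    rw [triMat_apply, triMat_apply]
    simp only [Fin.coe_castSucc, Fin.init]
    split_ifs <;> first
      | rfl
      | exact congrArg X (Fin.ext rfl)
      | exact congrArg Y (Fin.ext rfl)
  · rw [triMat_apply]
    have h1 : ¬ ((i.castSucc : ℕ) = ((Fin.last (n+1) : Fin (n+2)) : ℕ)) := by
      simp [Fin.last]; omega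
    rw [if_neg h1]
    by_cases h2 : (i : ℕ) + 1 = n + 1
    · have : i = Fin.last n := Fin.ext (by simpa [Fin.last] using h2)
      subst this
      rw [dif_pos (by simpa [Fin.last] using h2), if_pos rfl]
      congr 1
    · rw [dif_neg (by simpa [Fin.last] using h2), dif_neg (by simp only [Fin.coe_castSucc, Fin.val_last]; omega),
        if_neg (fun h => h2 (by rw [h]; rfl)), zero_mul]

lemma mulVec_last :
    (triMat (n+2) X Y).mulVec c (Fin.last (n+1)) =
      Y (Fin.last n) * c ((Fin.last n).castSucc) + X (Fin.last (n+1)) * c (Fin.last (n+1)) := by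
  unfold Matrix.mulVec dotProduct
  beta_reduce
  rw [Fin.sum_univ_castSucc]
  congr 1
  · have key : ∀ j : Fin (n+1), triMat (n+2) X Y (Fin.last (n+1)) j.castSucc * c j.castSucc
        = if j = Fin.last n then Y (Fin.last n) * c ((Fin.last n).castSucc) else 0 := by
      intro j
      rcases eq_or_ne j (Fin.last n) with hj | hj
      · subst hj
        rw [if_pos rfl, triMat_apply]
        rw [if_neg (by simp only [Fin.coe_castSucc, Fin.val_last]; omega), dif_neg (by simp only [Fin.coe_castSucc, Fin.val_last]; omega)]
        rw [dif_pos (show ((Fin.last n).castSucc : ℕ) + 1 = ((Fin.last (n+1) : Fin (n+2)) : ℕ) by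
          simp only [Fin.coe_castSucc, Fin.val_last])]
        exact congrArg (· * c (Fin.last n).castSucc) (congrArg Y (Fin.ext rfl))
      · rw [if_neg hj, triMat_apply]
        have hj' : (j : ℕ) ≠ n := fun h => hj (Fin.ext (by simpa [Fin.last] using h))
        have hlt := j.isLt
        rw [if_neg (by simp only [Fin.coe_castSucc, Fin.val_last]; omega), dif_neg (by simp only [Fin.coe_castSucc, Fin.val_last]; omega),
          dif_neg (by simp only [Fin.coe_castSucc, Fin.val_last]; omega), zero_mul]
    rw [Finset.sum_congr rfl (fun j _ => key j), Finset.sum_ite_eq' Finset.univ,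
      if_pos (Finset.mem_univ _)]
  · rw [triMat_apply, if_pos rfl]

end Step
end TriAux

namespace TriAux

lemma h01 : ∀ a : F, a = 0 ∨ a = 1 := by decide
lemma hne1 : ∀ a : F, a ≠ 0 → a = 1 := by decide
lemma addcancel : ∀ a b : F, a + b = 0 → a = b := by decide
lemma char2 : ∀ a : F, a + a = 0 := by decide
lemma vchar2 {m : ℕ} (v : Fin m → F) : v + v = 0 := funext fun i => char2 (v i)

lemma eq_of_init_last {m : ℕ} {c c' : Fin (m+1) → F}
    (h1 : Fin.init c = Fin.init c') (h2 : c (Fin.last m) = c' (Fin.last m)) : c = c' :=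
  funext (Fin.lastCases h2 (fun i => congrFun h1 i))

section Master
variable {n : ℕ} (X : Fin (n+2) → F) (Y : Fin (n+1) → F) (c : Fin (n+2) → F)

lemma mulVec_eq_iff (sVal : F) :
    (triMat (n+2) X Y).mulVec c = sVal • Pi.single (Fin.last (n+1)) 1 ↔
      ((triMat (n+1) (Fin.init X) (Fin.init Y)).mulVec (Fin.init c)
          = (Y (Fin.last n) * c (Fin.last (n+1))) • Pi.single (Fin.last n) 1)
        ∧ Y (Fin.last n) * Fin.init c (Fin.last n)
            + X (Fin.last (n+1)) * c (Fin.last (n+1)) = sVal := by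
  have hne : ∀ i : Fin (n+1), i.castSucc ≠ Fin.last (n+1) := fun i => (Fin.castSucc_lt_last i).ne
  constructor
  · intro h
    refine ⟨funext fun i => ?_, ?_⟩
    · have hi := congrFun h i.castSucc
      rw [mulVec_castSucc, Pi.smul_apply, Pi.single_eq_of_ne (hne i), smul_zero] at hi
      rw [Pi.smul_apply, Pi.single_apply, smul_eq_mul]
      rcases eq_or_ne i (Fin.last n) with h' | h'
      · subst h'
        rw [if_pos rfl, mul_one]
        rw [if_pos rfl] at hi
        exact addcancel _ _ hi
      · rw [if_neg h', mul_zero]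
        rw [if_neg h', add_zero] at hi
        exact hi
    · have hl := congrFun h (Fin.last (n+1))
      rw [mulVec_last] at hl
      rwa [Pi.smul_apply, Pi.single_eq_same, smul_eq_mul, mul_one] at hl
  · rintro ⟨h1, h2⟩
    funext j
    refine Fin.lastCases ?_ (fun i => ?_) j
    · rw [mulVec_last, Pi.smul_apply, Pi.single_eq_same, smul_eq_mul, mul_one]
      exact h2
    · rw [mulVec_castSucc, Pi.smul_apply, Pi.single_eq_of_ne (hne i), smul_zero]
      have hi := congrFun h1 i
      rw [Pi.smul_apply, Pi.single_apply, smul_eq_mul] at hi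
      rcases eq_or_ne i (Fin.last n) with h' | h'
      · subst h'
        rw [if_pos rfl, mul_one] at hi
        rw [hi, if_pos rfl]
        exact char2 _
      · rw [if_neg h', mul_zero] at hi
        rw [hi, if_neg h', add_zero]

end Master

section Base
variable (X : Fin 1 → F) (Y : Fin 0 → F)

lemma mulVec_one (u : Fin 1 → F) (i : Fin 1) :
    (triMat 1 X Y).mulVec u i = X 0 * u 0 := by
  have hi : i = 0 := Subsingleton.elim _ _
  subst hi
  unfold Matrix.mulVec dotProduct
  beta_reduce
  rw [Fin.sum_univ_one, triMat_apply, if_pos rfl]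

lemma card_sol : ∀ x : F, Nat.card {t : F // x * t = 0} = if x = 0 then 2 else 1 := by
  intro x
  rw [Nat.card_eq_fintype_card]
  revert x
  decide

end Base

end TriAux

namespace TriAux

theorem invariant : ∀ (n : ℕ) (X : Fin (n+1) → F) (Y : Fin n → F),
    (Nat.card {u : Fin (n+1) → F // (triMat (n+1) X Y).mulVec u = 0} = 2 ^ nul (st n X Y))
    ∧ ((st n X Y).1 ≠ 0 →
        (∃ c, (triMat (n+1) X Y).mulVec c = Pi.single (Fin.last n) 1
            ∧ c (Fin.last n) = (st n X Y).2.1)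
        ∧ ∀ u, (triMat (n+1) X Y).mulVec u = 0 → u (Fin.last n) = 0)
    ∧ ((st n X Y).1 = 0 →
        (∀ c, (triMat (n+1) X Y).mulVec c ≠ Pi.single (Fin.last n) 1)
        ∧ (∃ u, (triMat (n+1) X Y).mulVec u = 0 ∧ u (Fin.last n) = 1)
        ∧ (st n X Y).2.1 = 1) := by
  intro n
  induction n with
  | zero =>
    intro X Y
    have hmv0 : ∀ u : Fin 1 → F, ((triMat 1 X Y).mulVec u = 0 ↔ X 0 * u 0 = 0) := by
      intro u
      constructor
      · intro h
        have := congrFun h 0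
        rwa [mulVec_one] at this
      · intro h
        funext i
        rw [mulVec_one X Y u i, h]
        rfl
    have hl0 : (Fin.last 0) = (0 : Fin 1) := rfl
    have hmv1 : ∀ u : Fin 1 → F,
        ((triMat 1 X Y).mulVec u = Pi.single (Fin.last 0) 1 ↔ X 0 * u 0 = 1) := by
      intro u
      constructor
      · intro h
        have := congrFun h 0
        rw [mulVec_one] at this
        rw [this, hl0, Pi.single_eq_same]
      · intro h
        funext i
        have hi : i = 0 := Subsingleton.elim _ _
        subst hi
        rw [mulVec_one X Y u 0, h, hl0, Pi.single_eq_same]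
    rcases h01 (X 0) with hx | hx
    · refine ⟨?_, ?_, ?_⟩
      · have hall : ∀ u : Fin 1 → F, (triMat 1 X Y).mulVec u = 0 := by
          intro u; rw [hmv0, hx, zero_mul]
        have hn : nul (st 0 X Y) = 1 := by simp [st, nul, hx]
        rw [hn, pow_one, Nat.card_congr (Equiv.subtypeUnivEquiv hall),
          Nat.card_congr (Equiv.funUnique (Fin 1) F), Nat.card_zmod]
      · intro hd
        exact absurd (show (st 0 X Y).1 = 0 from hx) hd
      · intro _
        refine ⟨?_, ⟨fun _ => 1, ?_, rfl⟩, rfl⟩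
        · intro c hc
          rw [hmv1, hx, zero_mul] at hc
          exact absurd hc (by decide)
        · rw [hmv0, hx, zero_mul]
    · refine ⟨?_, ?_, ?_⟩
      · have hn : nul (st 0 X Y) = 0 := by simp [st, nul, hx]
        rw [hn, pow_zero]
        have e : {u : Fin 1 → F // (triMat 1 X Y).mulVec u = 0} ≃ {t : F // X 0 * t = 0} :=
          { toFun := fun u => ⟨u.1 0, (hmv0 u.1).mp u.2⟩
            invFun := fun t => ⟨fun _ => t.1, (hmv0 _).mpr t.2⟩
            left_inv := fun u => Subtype.ext (funext fun i => congrArg u.1 (Subsingleton.elim 0 i))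
            right_inv := fun t => rfl }
        rw [Nat.card_congr e, card_sol, if_neg (by rw [hx]; decide)]
      · intro _
        refine ⟨⟨fun _ => 1, ?_, rfl⟩, ?_⟩
        · rw [hmv1, hx, mul_one]
        · intro u hu
          rw [hmv0, hx, one_mul] at hu
          exact hu
      · intro hd
        rw [show (st 0 X Y).1 = X 0 from rfl, hx] at hd
        exact absurd hd (by decide)
  | succ n IH =>
    intro X Y
    obtain ⟨IH1, IH2, IH3⟩ := IH (Fin.init X) (Fin.init Y)
    have hstep : st (n+1) X Y
        = stStep (st n (Fin.init X) (Fin.init Y)) (X (Fin.last (n+1))) (Y (Fin.last n)) := rfl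
    have key0 : ∀ c : Fin (n+2) → F,
        ((triMat (n+2) X Y).mulVec c = 0 ↔
          ((triMat (n+1) (Fin.init X) (Fin.init Y)).mulVec (Fin.init c)
              = (Y (Fin.last n) * c (Fin.last (n+1))) • Pi.single (Fin.last n) 1
            ∧ Y (Fin.last n) * Fin.init c (Fin.last n)
                + X (Fin.last (n+1)) * c (Fin.last (n+1)) = 0)) := by
      intro c
      have := mulVec_eq_iff X Y c 0
      rwa [zero_smul] at this
    have key1 : ∀ c : Fin (n+2) → F,
        ((triMat (n+2) X Y).mulVec c = Pi.single (Fin.last (n+1)) 1 ↔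
          ((triMat (n+1) (Fin.init X) (Fin.init Y)).mulVec (Fin.init c)
              = (Y (Fin.last n) * c (Fin.last (n+1))) • Pi.single (Fin.last n) 1
            ∧ Y (Fin.last n) * Fin.init c (Fin.last n)
                + X (Fin.last (n+1)) * c (Fin.last (n+1)) = 1)) := by
      intro c
      have := mulVec_eq_iff X Y c 1
      rwa [one_smul] at this
    rcases h01 (Y (Fin.last n)) with hy | hy
    · -- y = 0 : block diagonal case
      have hstv : st (n+1) X Y = (X (Fin.last (n+1)), 1,
          (st n (Fin.init X) (Fin.init Y)).2.2
            + if (st n (Fin.init X) (Fin.init Y)).1 = 0 then 1 else 0) := by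
        rw [hstep, stStep, if_pos hy]
      have k0 : ∀ c : Fin (n+2) → F,
          ((triMat (n+2) X Y).mulVec c = 0 ↔
            ((triMat (n+1) (Fin.init X) (Fin.init Y)).mulVec (Fin.init c) = 0
              ∧ X (Fin.last (n+1)) * c (Fin.last (n+1)) = 0)) := by
        intro c
        rw [key0 c]
        simp only [hy, zero_mul, zero_smul, zero_add]
      have k1 : ∀ c : Fin (n+2) → F,
          ((triMat (n+2) X Y).mulVec c = Pi.single (Fin.last (n+1)) 1 ↔
            ((triMat (n+1) (Fin.init X) (Fin.init Y)).mulVec (Fin.init c) = 0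
              ∧ X (Fin.last (n+1)) * c (Fin.last (n+1)) = 1)) := by
        intro c
        rw [key1 c]
        simp only [hy, zero_mul, zero_smul, zero_add]
      refine ⟨?_, ?_, ?_⟩
      · have hcard : Nat.card
            ({u : Fin (n+1) → F // (triMat (n+1) (Fin.init X) (Fin.init Y)).mulVec u = 0}
              × {t : F // X (Fin.last (n+1)) * t = 0})
            = Nat.card {c : Fin (n+2) → F // (triMat (n+2) X Y).mulVec c = 0} := by
          apply Nat.card_eq_of_bijective
            (fun p => ⟨Fin.snoc p.1.1 p.2.1, (k0 _).mpr
              ⟨by rw [Fin.init_snoc]; exact p.1.2, by rw [Fin.snoc_last]; exact p.2.2⟩⟩)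
          constructor
          · rintro ⟨⟨u, hu⟩, ⟨t, ht⟩⟩ ⟨⟨u', hu'⟩, ⟨t', ht'⟩⟩ h
            simp only [Subtype.mk.injEq] at h
            have h1 : u = u' := by
              have := congrArg Fin.init h
              rwa [Fin.init_snoc, Fin.init_snoc] at this
            have h2 : t = t' := by
              have := congrFun h (Fin.last (n+1))
              rwa [Fin.snoc_last, Fin.snoc_last] at this
            simp [h1, h2]
          · rintro ⟨c, hc⟩
            obtain ⟨h1, h2⟩ := (k0 c).mp hc
            exact ⟨⟨⟨Fin.init c, h1⟩, ⟨c (Fin.last (n+1)), h2⟩⟩,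
              Subtype.ext (Fin.snoc_init_self c)⟩
        rw [← hcard, Nat.card_prod, IH1, card_sol]
        rw [hstv]
        simp only [nul]
        rcases h01 (X (Fin.last (n+1))) with hx0 | hx0 <;> rw [hx0] <;>
          simp [pow_succ]
      · intro hd'
        rw [hstv] at hd'
        have hx1 : X (Fin.last (n+1)) = 1 := hne1 _ hd'
        constructor
        · refine ⟨Fin.snoc 0 1, (k1 _).mpr ⟨?_, ?_⟩, ?_⟩
          · rw [Fin.init_snoc]
            exact Matrix.mulVec_zero _
          · rw [Fin.snoc_last, hx1, mul_one]
          · rw [Fin.snoc_last, hstv]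
        · intro u hu
          have h2 := ((k0 u).mp hu).2
          rwa [hx1, one_mul] at h2
      · intro hd'
        rw [hstv] at hd'
        have hx0 : X (Fin.last (n+1)) = 0 := hd'
        refine ⟨?_, ⟨Fin.snoc 0 1, (k0 _).mpr ⟨?_, ?_⟩, by rw [Fin.snoc_last]⟩, by rw [hstv]⟩
        · intro c hc
          have h2 := ((k1 c).mp hc).2
          rw [hx0, zero_mul] at h2
          exact absurd h2 (by decide)
        · rw [Fin.init_snoc]
          exact Matrix.mulVec_zero _
        · rw [Fin.snoc_last, hx0, zero_mul]
    · -- y = 1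
      have hstv : st (n+1) X Y = (X (Fin.last (n+1)) * (st n (Fin.init X) (Fin.init Y)).1
          + (st n (Fin.init X) (Fin.init Y)).2.1,
          (st n (Fin.init X) (Fin.init Y)).1, (st n (Fin.init X) (Fin.init Y)).2.2) := by
        rw [hstep, stStep, if_neg (by rw [hy]; decide)]
      have k0 : ∀ c : Fin (n+2) → F,
          ((triMat (n+2) X Y).mulVec c = 0 ↔
            ((triMat (n+1) (Fin.init X) (Fin.init Y)).mulVec (Fin.init c)
                = c (Fin.last (n+1)) • Pi.single (Fin.last n) 1
              ∧ Fin.init c (Fin.last n) + X (Fin.last (n+1)) * c (Fin.last (n+1)) = 0)) := by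
        intro c
        rw [key0 c]
        simp only [hy, one_mul]
      have k1 : ∀ c : Fin (n+2) → F,
          ((triMat (n+2) X Y).mulVec c = Pi.single (Fin.last (n+1)) 1 ↔
            ((triMat (n+1) (Fin.init X) (Fin.init Y)).mulVec (Fin.init c)
                = c (Fin.last (n+1)) • Pi.single (Fin.last n) 1
              ∧ Fin.init c (Fin.last n) + X (Fin.last (n+1)) * c (Fin.last (n+1)) = 1)) := by
        intro c
        rw [key1 c]
        simp only [hy, one_mul]
      rcases ne_or_eq (st n (Fin.init X) (Fin.init Y)).1 0 with hd | hd
      · -- d = 1 : last block is invertible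
        have hd1 : (st n (Fin.init X) (Fin.init Y)).1 = 1 := hne1 _ hd
        obtain ⟨⟨c₀, hc₀, hc₀e⟩, hker0⟩ := IH2 hd
        have hAu : ∀ u, (triMat (n+1) (Fin.init X) (Fin.init Y)).mulVec u
            = Pi.single (Fin.last n) 1 → u (Fin.last n) = (st n (Fin.init X) (Fin.init Y)).2.1 := by
          intro u hu
          have hsum : (triMat (n+1) (Fin.init X) (Fin.init Y)).mulVec (u + c₀) = 0 := by
            rw [Matrix.mulVec_add, hu, hc₀, vchar2]
          have h2 := hker0 _ hsum
          rw [Pi.add_apply] at h2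
          rw [← hc₀e]
          exact addcancel _ _ h2
        rcases h01 (X (Fin.last (n+1)) + (st n (Fin.init X) (Fin.init Y)).2.1) with hxe | hxe
        · -- d' = x + e = 0 : block becomes singular
          have hd'v : X (Fin.last (n+1)) * (st n (Fin.init X) (Fin.init Y)).1
              + (st n (Fin.init X) (Fin.init Y)).2.1 = 0 := by
            rw [hd1, mul_one]
            exact hxe
          refine ⟨?_, ?_, ?_⟩
          · have hcard : Nat.card
                ({u : Fin (n+1) → F //
                    (triMat (n+1) (Fin.init X) (Fin.init Y)).mulVec u = 0} × F)
                = Nat.card {c : Fin (n+2) → F // (triMat (n+2) X Y).mulVec c = 0} := by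
              apply Nat.card_eq_of_bijective
                (fun p => ⟨Fin.snoc (p.1.1 + p.2 • c₀) p.2, (k0 _).mpr (by
                  rw [Fin.init_snoc, Fin.snoc_last]
                  constructor
                  · rw [Matrix.mulVec_add, p.1.2, zero_add, Matrix.mulVec_smul, hc₀]
                  · rw [Pi.add_apply, hker0 p.1.1 p.1.2, zero_add, Pi.smul_apply,
                      smul_eq_mul, hc₀e]
                    calc p.2 * (st n (Fin.init X) (Fin.init Y)).2.1
                        + X (Fin.last (n+1)) * p.2
                        = p.2 * (X (Fin.last (n+1))
                            + (st n (Fin.init X) (Fin.init Y)).2.1) := by ring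
                      _ = 0 := by rw [hxe, mul_zero])⟩)
              constructor
              · rintro ⟨⟨u, hu⟩, t⟩ ⟨⟨u', hu'⟩, t'⟩ h
                simp only [Subtype.mk.injEq] at h
                have h2 : t = t' := by
                  have := congrFun h (Fin.last (n+1))
                  rwa [Fin.snoc_last, Fin.snoc_last] at this
                subst h2
                have h1 : u + t • c₀ = u' + t • c₀ := by
                  have := congrArg Fin.init h
                  rwa [Fin.init_snoc, Fin.init_snoc] at this
                have h3 : u = u' := by
                  have := congrArg (fun v => v + t • c₀) h1
                  simp only [add_assoc, vchar2, add_zero] at this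
                  exact this
                simp [h3]
              · rintro ⟨c, hc⟩
                obtain ⟨h1, h2⟩ := (k0 c).mp hc
                have hu : (triMat (n+1) (Fin.init X) (Fin.init Y)).mulVec
                    (Fin.init c + c (Fin.last (n+1)) • c₀) = 0 := by
                  rw [Matrix.mulVec_add, h1, Matrix.mulVec_smul, hc₀, vchar2]
                refine ⟨⟨⟨Fin.init c + c (Fin.last (n+1)) • c₀, hu⟩, c (Fin.last (n+1))⟩, ?_⟩
                apply Subtype.ext
                have he : Fin.init c + c (Fin.last (n+1)) • c₀ + c (Fin.last (n+1)) • c₀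
                    = Fin.init c := by
                  rw [add_assoc, vchar2, add_zero]
                show Fin.snoc (Fin.init c + c (Fin.last (n+1)) • c₀ + c (Fin.last (n+1)) • c₀)
                    (c (Fin.last (n+1))) = c
                rw [he]
                exact Fin.snoc_init_self c
            rw [← hcard, Nat.card_prod, IH1, Nat.card_zmod]
            have hnul' : nul (st (n+1) X Y) = nul (st n (Fin.init X) (Fin.init Y)) + 1 := by
              rw [hstv]
              simp only [nul, if_pos hd'v, if_neg hd]
            rw [hnul', pow_succ]
          · intro hd'
            rw [hstv] at hd'
            exact absurd hd'v hd'
          · intro _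
            refine ⟨?_, ⟨Fin.snoc c₀ 1, ?_, by rw [Fin.snoc_last]⟩, ?_⟩
            · intro c hc
              obtain ⟨h1, h2⟩ := (k1 c).mp hc
              rcases h01 (c (Fin.last (n+1))) with ht | ht
              · rw [ht, zero_smul] at h1
                rw [ht, mul_zero, add_zero] at h2
                rw [hker0 _ h1] at h2
                exact absurd h2 (by decide)
              · rw [ht, one_smul] at h1
                rw [ht, mul_one, hAu _ h1, add_comm] at h2
                rw [hxe] at h2
                exact absurd h2 (by decide)
            · apply (k0 _).mpr
              rw [Fin.init_snoc, Fin.snoc_last]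
              constructor
              · rw [one_smul]
                exact hc₀
              · rw [hc₀e, mul_one, add_comm]
                exact hxe
            · rw [hstv]
              exact hd1
        · -- d' = x + e = 1 : block stays invertible
          have hd'v : X (Fin.last (n+1)) * (st n (Fin.init X) (Fin.init Y)).1
              + (st n (Fin.init X) (Fin.init Y)).2.1 = 1 := by
            rw [hd1, mul_one]
            exact hxe
          refine ⟨?_, ?_, ?_⟩
          · have hcard : Nat.card
                {u : Fin (n+1) → F // (triMat (n+1) (Fin.init X) (Fin.init Y)).mulVec u = 0}
                = Nat.card {c : Fin (n+2) → F // (triMat (n+2) X Y).mulVec c = 0} := by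
              apply Nat.card_eq_of_bijective
                (fun u => ⟨Fin.snoc u.1 0, (k0 _).mpr (by
                  rw [Fin.init_snoc, Fin.snoc_last]
                  exact ⟨by rw [zero_smul]; exact u.2,
                    by rw [hker0 u.1 u.2, mul_zero, add_zero]⟩)⟩)
              constructor
              · rintro ⟨u, hu⟩ ⟨u', hu'⟩ h
                simp only [Subtype.mk.injEq] at h
                have h1 : u = u' := by
                  have := congrArg Fin.init h
                  rwa [Fin.init_snoc, Fin.init_snoc] at this
                simp [h1]
              · rintro ⟨c, hc⟩
                obtain ⟨h1, h2⟩ := (k0 c).mp hc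
                have ht : c (Fin.last (n+1)) = 0 := by
                  rcases h01 (c (Fin.last (n+1))) with ht | ht
                  · exact ht
                  · rw [ht, one_smul] at h1
                    rw [ht, mul_one, hAu _ h1, add_comm] at h2
                    rw [hxe] at h2
                    exact absurd h2 (by decide)
                rw [ht, zero_smul] at h1
                refine ⟨⟨Fin.init c, h1⟩, ?_⟩
                apply Subtype.ext
                show Fin.snoc (Fin.init c) 0 = c
                rw [← ht]
                exact Fin.snoc_init_self c
            rw [← hcard, IH1]
            have hnul' : nul (st (n+1) X Y) = nul (st n (Fin.init X) (Fin.init Y)) := by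
              rw [hstv]
              simp only [nul, if_neg (show ¬(X (Fin.last (n+1))
                * (st n (Fin.init X) (Fin.init Y)).1
                + (st n (Fin.init X) (Fin.init Y)).2.1 = 0) from by rw [hd'v]; decide),
                if_neg hd]
            rw [hnul']
          · intro _
            constructor
            · refine ⟨Fin.snoc c₀ 1, (k1 _).mpr ⟨?_, ?_⟩, ?_⟩
              · rw [Fin.init_snoc, Fin.snoc_last, one_smul]
                exact hc₀
              · rw [Fin.init_snoc, Fin.snoc_last, hc₀e, mul_one, add_comm]
                exact hxe
              · rw [Fin.snoc_last, hstv]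
                exact hd1.symm
            · intro u hu
              obtain ⟨h1, h2⟩ := (k0 u).mp hu
              rcases h01 (u (Fin.last (n+1))) with ht | ht
              · exact ht
              · rw [ht, one_smul] at h1
                rw [ht, mul_one, hAu _ h1, add_comm] at h2
                rw [hxe] at h2
                exact absurd h2 (by decide)
          · intro hd'
            rw [hstv] at hd'
            have h0 : X (Fin.last (n+1)) * (st n (Fin.init X) (Fin.init Y)).1
                + (st n (Fin.init X) (Fin.init Y)).2.1 = 0 := hd'
            rw [hd'v] at h0
            exact absurd h0 (by decide)
      · -- d = 0 : last block was singular
        obtain ⟨hnosol, ⟨w, hw, hwlast⟩, he1⟩ := IH3 hd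
        have hd'v : X (Fin.last (n+1)) * (st n (Fin.init X) (Fin.init Y)).1
            + (st n (Fin.init X) (Fin.init Y)).2.1 = 1 := by
          rw [hd, mul_zero, zero_add]
          exact he1
        have hker' : ∀ c : Fin (n+2) → F, (triMat (n+2) X Y).mulVec c = 0 →
            ((triMat (n+1) (Fin.init X) (Fin.init Y)).mulVec (Fin.init c) = 0
              ∧ c (Fin.last (n+1)) = 0 ∧ Fin.init c (Fin.last n) = 0) := by
          intro c hc
          obtain ⟨h1, h2⟩ := (k0 c).mp hc
          rcases h01 (c (Fin.last (n+1))) with ht | ht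
          · rw [ht, zero_smul] at h1
            rw [ht, mul_zero, add_zero] at h2
            exact ⟨h1, ht, h2⟩
          · rw [ht, one_smul] at h1
            exact absurd h1 (hnosol _)
        refine ⟨?_, ?_, ?_⟩
        · have hcard : Nat.card
              ({c : Fin (n+2) → F // (triMat (n+2) X Y).mulVec c = 0} × F)
              = Nat.card {u : Fin (n+1) → F //
                  (triMat (n+1) (Fin.init X) (Fin.init Y)).mulVec u = 0} := by
            apply Nat.card_eq_of_bijective
              (fun p => ⟨Fin.init p.1.1 + p.2 • w, by
                rw [Matrix.mulVec_add, (hker' p.1.1 p.1.2).1, Matrix.mulVec_smul, hw,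
                  smul_zero, add_zero]⟩)
            constructor
            · rintro ⟨⟨c, hc⟩, t⟩ ⟨⟨c', hc'⟩, t'⟩ h
              simp only [Subtype.mk.injEq] at h
              have h2 : t = t' := by
                have := congrFun h (Fin.last n)
                rw [Pi.add_apply, Pi.add_apply, (hker' c hc).2.2, (hker' c' hc').2.2,
                  zero_add, zero_add, Pi.smul_apply, Pi.smul_apply, hwlast,
                  smul_eq_mul, smul_eq_mul, mul_one, mul_one] at this
                exact this
              subst h2
              have h1 : Fin.init c = Fin.init c' := by
                have := congrArg (fun v => v + t • w) h
                simp only [add_assoc, vchar2, add_zero] at this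
                exact this
              have h3 : c = c' :=
                eq_of_init_last h1 (by rw [(hker' c hc).2.1, (hker' c' hc').2.1])
              simp [h3]
            · rintro ⟨v, hv⟩
              have hu : (triMat (n+1) (Fin.init X) (Fin.init Y)).mulVec
                  (v + v (Fin.last n) • w) = 0 := by
                rw [Matrix.mulVec_add, hv, zero_add, Matrix.mulVec_smul, hw, smul_zero]
              have hulast : (v + v (Fin.last n) • w) (Fin.last n) = 0 := by
                rw [Pi.add_apply, Pi.smul_apply, hwlast, smul_eq_mul, mul_one]
                exact char2 _
              have hc : (triMat (n+2) X Y).mulVec (Fin.snoc (v + v (Fin.last n) • w) 0)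
                  = 0 := by
                apply (k0 _).mpr
                rw [Fin.init_snoc, Fin.snoc_last]
                exact ⟨by rw [zero_smul]; exact hu,
                  by rw [mul_zero, add_zero]; exact hulast⟩
              refine ⟨⟨⟨Fin.snoc (v + v (Fin.last n) • w) 0, hc⟩, v (Fin.last n)⟩, ?_⟩
              apply Subtype.ext
              have hfin : Fin.init ((Fin.snoc (v + v (Fin.last n) • w) (0:F)) : Fin (n+2) → F)
                  + v (Fin.last n) • w = v := by
                rw [Fin.init_snoc, add_assoc, vchar2, add_zero]
              exact hfin
          rw [Nat.card_prod, IH1, Nat.card_zmod] at hcard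
          have hnuls : nul (st n (Fin.init X) (Fin.init Y))
              = (st n (Fin.init X) (Fin.init Y)).2.2 + 1 := by
            simp only [nul, if_pos hd]
          have hnul' : nul (st (n+1) X Y) = (st n (Fin.init X) (Fin.init Y)).2.2 := by
            rw [hstv]
            simp only [nul, if_neg (show ¬(X (Fin.last (n+1))
              * (st n (Fin.init X) (Fin.init Y)).1
              + (st n (Fin.init X) (Fin.init Y)).2.1 = 0) from by rw [hd'v]; decide), add_zero]
          rw [hnuls, pow_succ] at hcard
          rw [hnul']
          exact Nat.eq_of_mul_eq_mul_right (by norm_num) hcard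
        · intro _
          constructor
          · refine ⟨Fin.snoc w 0, (k1 _).mpr ⟨?_, ?_⟩, ?_⟩
            · rw [Fin.init_snoc, Fin.snoc_last, zero_smul]
              exact hw
            · rw [Fin.init_snoc, Fin.snoc_last, hwlast, mul_zero, add_zero]
            · rw [Fin.snoc_last, hstv]
              exact hd.symm
          · intro u hu
            exact (hker' u hu).2.1
        · intro hd'
          rw [hstv] at hd'
          have h0 : X (Fin.last (n+1)) * (st n (Fin.init X) (Fin.init Y)).1
              + (st n (Fin.init X) (Fin.init Y)).2.1 = 0 := hd'
          rw [hd'v] at h0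
          exact absurd h0 (by decide)

lemma rank_nul (n : ℕ) (X : Fin (n+1) → F) (Y : Fin n → F) :
    (triMat (n+1) X Y).rank + nul (st n X Y) = n + 1 := by
  have h1 := (invariant n X Y).1
  have e : {u : Fin (n+1) → F // (triMat (n+1) X Y).mulVec u = 0}
      ≃ LinearMap.ker (triMat (n+1) X Y).mulVecLin :=
    Equiv.subtypeEquivRight (fun u => by rw [LinearMap.mem_ker, Matrix.mulVecLin_apply])
  have hcard : Nat.card (LinearMap.ker (triMat (n+1) X Y).mulVecLin) = 2 ^ nul (st n X Y) := by
    rw [← Nat.card_congr e, h1]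
  letI : Fintype (LinearMap.ker (triMat (n+1) X Y).mulVecLin) := Fintype.ofFinite _
  have hpow : Fintype.card (LinearMap.ker (triMat (n+1) X Y).mulVecLin)
      = 2 ^ Module.finrank F (LinearMap.ker (triMat (n+1) X Y).mulVecLin) := by
    have := Module.card_eq_pow_finrank (K := F) (V := LinearMap.ker (triMat (n+1) X Y).mulVecLin)
    rwa [ZMod.card] at this
  rw [Nat.card_eq_fintype_card, hpow] at hcard
  have hker : Module.finrank F (LinearMap.ker (triMat (n+1) X Y).mulVecLin) = nul (st n X Y) :=
    Nat.pow_right_injective (le_refl 2) hcard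
  have hrn := LinearMap.finrank_range_add_finrank_ker (triMat (n+1) X Y).mulVecLin
  rw [hker, Module.finrank_fin_fun] at hrn
  exact hrn

lemma nul_le (n : ℕ) (X : Fin (n+1) → F) (Y : Fin n → F) : nul (st n X Y) ≤ n + 1 := by
  have := rank_nul n X Y
  omega

lemma rank_eq (n : ℕ) (X : Fin (n+1) → F) (Y : Fin n → F) :
    (triMat (n+1) X Y).rank = n + 1 - nul (st n X Y) := by
  have := rank_nul n X Y
  omega

end TriAux


namespace TriAux

noncomputable def Ap (m : ℕ) : Polynomial ℤ :=
  ∑ XD : Fin (m+1) → F, ∑ Y : Fin m → F,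
    if (st m XD Y).1 = 0 then 0 else (X : Polynomial ℤ) ^ (m + 1 - nul (st m XD Y))

noncomputable def Bp (m : ℕ) : Polynomial ℤ :=
  ∑ XD : Fin (m+1) → F, ∑ Y : Fin m → F,
    if (st m XD Y).1 = 0 then (X : Polynomial ℤ) ^ (m + 1 - nul (st m XD Y)) else 0

lemma LPoly_eq (m : ℕ) : LPoly (m+1) = Ap m + Bp m := by
  rw [LPoly, Ap, Bp, ← Finset.sum_add_distrib]
  apply Finset.sum_congr rfl
  intro XD _
  rw [← Finset.sum_add_distrib]
  apply Finset.sum_congr rfl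
  intro Y _
  rw [rank_eq]
  split_ifs <;> simp

lemma sumF {M : Type*} [AddCommMonoid M] (f : F → M) : ∑ t : F, f t = f 0 + f 1 := by
  have : (Finset.univ : Finset F) = {0, 1} := by decide
  rw [this, Finset.sum_insert (by decide), Finset.sum_singleton]

lemma sum_pi_succ {M : Type*} [AddCommMonoid M] (m : ℕ) (g : (Fin (m+1) → F) → M) :
    ∑ v : Fin (m+1) → F, g v = ∑ t : F, ∑ v : Fin m → F, g (Fin.snoc v t) := by
  rw [← Equiv.sum_comp (Fin.snocEquiv (fun _ => F)) g, Fintype.sum_prod_type]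
  rfl

lemma st_snoc (m : ℕ) (X' : Fin (m+1) → F) (Y' : Fin m → F) (x y : F) :
    st (m+1) (Fin.snoc X' x) (Fin.snoc Y' y) = stStep (st m X' Y') x y := by
  have hrfl : st (m+1) ((Fin.snoc X' x : Fin (m+2) → F)) ((Fin.snoc Y' y : Fin (m+1) → F))
      = stStep (st m (Fin.init (Fin.snoc X' x : Fin (m+2) → F))
          (Fin.init (Fin.snoc Y' y : Fin (m+1) → F)))
        ((Fin.snoc X' x : Fin (m+2) → F) (Fin.last (m+1)))
        ((Fin.snoc Y' y : Fin (m+1) → F) (Fin.last m)) := rfl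
  rw [hrfl, Fin.init_snoc, Fin.init_snoc, Fin.snoc_last, Fin.snoc_last]

end TriAux

namespace TriAux

lemma cellA (m : ℕ) (X' : Fin (m+1) → F) (Y' : Fin m → F) :
    (∑ x : F, ∑ y : F,
      (if (stStep (st m X' Y') x y).1 = 0 then 0
        else (X : Polynomial ℤ) ^ (m + 2 - nul (stStep (st m X' Y') x y))))
    = (if (st m X' Y').1 = 0
        then ((X : Polynomial ℤ) + 2 * X ^ 2) * X ^ (m + 1 - nul (st m X' Y'))
        else (2 * (X : Polynomial ℤ)) * X ^ (m + 1 - nul (st m X' Y'))) := by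
  have hle := nul_le m X' Y'
  simp only [sumF]
  rcases h01 (st m X' Y').1 with hd | hd
  · have he : (st m X' Y').2.1 = 1 := ((invariant m X' Y').2.2 hd).2.2
    have h00 : stStep (st m X' Y') 0 0 = (0, 1, (st m X' Y').2.2 + 1) := by
      simp [stStep, hd]
    have h10 : stStep (st m X' Y') 1 0 = (1, 1, (st m X' Y').2.2 + 1) := by
      simp [stStep, hd]
    have h01' : stStep (st m X' Y') 0 1 = (1, 0, (st m X' Y').2.2) := by
      simp [stStep, hd, he]
    have h11 : stStep (st m X' Y') 1 1 = (1, 0, (st m X' Y').2.2) := by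
      simp [stStep, hd, he]
    have hnulv : nul (st m X' Y') = (st m X' Y').2.2 + 1 := by
      simp [nul, hd]
    rw [h00, h10, h01', h11, if_pos hd, hnulv]
    simp only [nul]
    norm_num
    have hK : (st m X' Y').2.2 ≤ m := by omega
    have e1 : m + 2 - ((st m X' Y').2.2 + 1 + 1) = m - (st m X' Y').2.2 := by omega
    have e2 : m + 2 - ((st m X' Y').2.2 + 1) = m - (st m X' Y').2.2 + 1 := by omega
    have e3 : m + 2 - (st m X' Y').2.2 = m - (st m X' Y').2.2 + 2 := by omega
    have e4 : m + 1 - ((st m X' Y').2.2 + 1) = m - (st m X' Y').2.2 := by omega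
    rw [e2, e3, e4]
    ring
  · have hd' : (st m X' Y').1 ≠ 0 := by rw [hd]; decide
    have h00 : stStep (st m X' Y') 0 0 = (0, 1, (st m X' Y').2.2) := by
      simp [stStep, hd]
    have h10 : stStep (st m X' Y') 1 0 = (1, 1, (st m X' Y').2.2) := by
      simp [stStep, hd]
    have hnulv : nul (st m X' Y') = (st m X' Y').2.2 := by
      simp [nul, hd']
    have hK : (st m X' Y').2.2 ≤ m + 1 := by omega
    have e2' : 2 + m - (st m X' Y').2.2 = (1 + m - (st m X' Y').2.2) + 1 := by omega
    rcases h01 (st m X' Y').2.1 with he | he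
    · have h01' : stStep (st m X' Y') 0 1 = (0, 1, (st m X' Y').2.2) := by
        simp [stStep, hd, he]
      have h11 : stStep (st m X' Y') 1 1 = (1, 1, (st m X' Y').2.2) := by
        simp [stStep, hd, he]
      rw [h00, h10, h01', h11, if_neg hd', hnulv]
      simp only [nul]
      norm_num
      rw [show m + 2 - (st m X' Y').2.2 = (m + 1 - (st m X' Y').2.2) + 1 from by omega,
        pow_succ]
      ring
    · have h01' : stStep (st m X' Y') 0 1 = (1, 1, (st m X' Y').2.2) := by
        simp [stStep, hd, he]
      have h11 : stStep (st m X' Y') 1 1 = (0, 1, (st m X' Y').2.2) := by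
        simp [stStep, hd, he, (by decide : (1:F)+1 = 0)]
      rw [h00, h10, h01', h11, if_neg hd', hnulv]
      simp only [nul]
      norm_num
      rw [show m + 2 - (st m X' Y').2.2 = (m + 1 - (st m X' Y').2.2) + 1 from by omega,
        pow_succ]
      ring

lemma cellB (m : ℕ) (X' : Fin (m+1) → F) (Y' : Fin m → F) :
    (∑ x : F, ∑ y : F,
      (if (stStep (st m X' Y') x y).1 = 0
        then (X : Polynomial ℤ) ^ (m + 2 - nul (stStep (st m X' Y') x y)) else 0))
    = (if (st m X' Y').1 = 0
        then (X : Polynomial ℤ) ^ (m + 1 - nul (st m X' Y'))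
        else 2 * (X : Polynomial ℤ) ^ (m + 1 - nul (st m X' Y'))) := by
  have hle := nul_le m X' Y'
  simp only [sumF]
  rcases h01 (st m X' Y').1 with hd | hd
  · have he : (st m X' Y').2.1 = 1 := ((invariant m X' Y').2.2 hd).2.2
    have h00 : stStep (st m X' Y') 0 0 = (0, 1, (st m X' Y').2.2 + 1) := by
      simp [stStep, hd]
    have h10 : stStep (st m X' Y') 1 0 = (1, 1, (st m X' Y').2.2 + 1) := by
      simp [stStep, hd]
    have h01' : stStep (st m X' Y') 0 1 = (1, 0, (st m X' Y').2.2) := by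
      simp [stStep, hd, he]
    have h11 : stStep (st m X' Y') 1 1 = (1, 0, (st m X' Y').2.2) := by
      simp [stStep, hd, he]
    have hnulv : nul (st m X' Y') = (st m X' Y').2.2 + 1 := by
      simp [nul, hd]
    rw [h00, h10, h01', h11, if_pos hd, hnulv]
    simp only [nul]
    norm_num
    congr 1
    omega
  · have hd' : (st m X' Y').1 ≠ 0 := by rw [hd]; decide
    have h00 : stStep (st m X' Y') 0 0 = (0, 1, (st m X' Y').2.2) := by
      simp [stStep, hd]
    have h10 : stStep (st m X' Y') 1 0 = (1, 1, (st m X' Y').2.2) := by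
      simp [stStep, hd]
    have hnulv : nul (st m X' Y') = (st m X' Y').2.2 := by
      simp [nul, hd']
    have hK : (st m X' Y').2.2 ≤ m + 1 := by omega
    rcases h01 (st m X' Y').2.1 with he | he
    · have h01' : stStep (st m X' Y') 0 1 = (0, 1, (st m X' Y').2.2) := by
        simp [stStep, hd, he]
      have h11 : stStep (st m X' Y') 1 1 = (1, 1, (st m X' Y').2.2) := by
        simp [stStep, hd, he]
      rw [h00, h10, h01', h11, if_neg hd', hnulv]
      simp only [nul]
      norm_num
      rw [show m + 2 - ((st m X' Y').2.2 + 1) = m + 1 - (st m X' Y').2.2 from by omega]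
      ring
    · have h01' : stStep (st m X' Y') 0 1 = (1, 1, (st m X' Y').2.2) := by
        simp [stStep, hd, he]
      have h11 : stStep (st m X' Y') 1 1 = (0, 1, (st m X' Y').2.2) := by
        simp [stStep, hd, he, (by decide : (1:F)+1 = 0)]
      rw [h00, h10, h01', h11, if_neg hd', hnulv]
      simp only [nul]
      norm_num
      rw [show m + 2 - ((st m X' Y').2.2 + 1) = m + 1 - (st m X' Y').2.2 from by omega]
      ring

end TriAux

namespace TriAux

lemma Ap_rec (m : ℕ) :
    Ap (m+1) = 2 * (X : Polynomial ℤ) * Ap m + ((X : Polynomial ℤ) + 2 * X ^ 2) * Bp m := by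
  rw [Ap]
  rw [sum_pi_succ (m+1) (fun XD => ∑ Y : Fin (m+1) → F,
    if (st (m+1) XD Y).1 = 0 then 0 else (X : Polynomial ℤ) ^ (m + 2 - nul (st (m+1) XD Y)))]
  have hinner : ∀ (x : F) (X' : Fin (m+1) → F),
      (∑ Y : Fin (m+1) → F, if (st (m+1) (Fin.snoc X' x) Y).1 = 0 then 0
        else (X : Polynomial ℤ) ^ (m + 2 - nul (st (m+1) (Fin.snoc X' x) Y)))
      = ∑ y : F, ∑ Y' : Fin m → F,
          if (stStep (st m X' Y') x y).1 = 0 then 0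
          else (X : Polynomial ℤ) ^ (m + 2 - nul (stStep (st m X' Y') x y)) := by
    intro x X'
    rw [sum_pi_succ m (fun Y => if (st (m+1) (Fin.snoc X' x) Y).1 = 0 then 0
      else (X : Polynomial ℤ) ^ (m + 2 - nul (st (m+1) (Fin.snoc X' x) Y)))]
    apply Finset.sum_congr rfl
    intro y _
    apply Finset.sum_congr rfl
    intro Y' _
    rw [st_snoc]
  simp only [hinner]
  rw [Finset.sum_comm]
  have hswap : ∀ X' : Fin (m+1) → F,
      (∑ x : F, ∑ y : F, ∑ Y' : Fin m → F,
        if (stStep (st m X' Y') x y).1 = 0 then 0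
        else (X : Polynomial ℤ) ^ (m + 2 - nul (stStep (st m X' Y') x y)))
      = ∑ Y' : Fin m → F, ∑ x : F, ∑ y : F,
        if (stStep (st m X' Y') x y).1 = 0 then 0
        else (X : Polynomial ℤ) ^ (m + 2 - nul (stStep (st m X' Y') x y)) := by
    intro X'
    trans (∑ x : F, ∑ Y' : Fin m → F, ∑ y : F,
      if (stStep (st m X' Y') x y).1 = 0 then 0
      else (X : Polynomial ℤ) ^ (m + 2 - nul (stStep (st m X' Y') x y)))
    · exact Finset.sum_congr rfl fun x _ => Finset.sum_comm
    · exact Finset.sum_comm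
  have hswap2 : ∀ X' : Fin (m+1) → F,
      (∑ x : F, ∑ y : F, ∑ Y' : Fin m → F,
        if (stStep (st m X' Y') x y).1 = 0 then 0
        else (X : Polynomial ℤ) ^ (m + 2 - nul (stStep (st m X' Y') x y)))
      = ∑ Y' : Fin m → F, ∑ x : F, ∑ y : F,
        if (stStep (st m X' Y') x y).1 = 0 then 0
        else (X : Polynomial ℤ) ^ (m + 2 - nul (stStep (st m X' Y') x y)) := hswap
  calc (∑ X' : Fin (m+1) → F, ∑ x : F, ∑ y : F, ∑ Y' : Fin m → F,
        if (stStep (st m X' Y') x y).1 = 0 then 0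
        else (X : Polynomial ℤ) ^ (m + 2 - nul (stStep (st m X' Y') x y)))
      = ∑ X' : Fin (m+1) → F, ∑ Y' : Fin m → F, ∑ x : F, ∑ y : F,
        if (stStep (st m X' Y') x y).1 = 0 then 0
        else (X : Polynomial ℤ) ^ (m + 2 - nul (stStep (st m X' Y') x y)) := by
        exact Finset.sum_congr rfl fun X' _ => hswap2 X'
    _ = ∑ X' : Fin (m+1) → F, ∑ Y' : Fin m → F,
        (if (st m X' Y').1 = 0
          then ((X : Polynomial ℤ) + 2 * X ^ 2) * X ^ (m + 1 - nul (st m X' Y'))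
          else (2 * (X : Polynomial ℤ)) * X ^ (m + 1 - nul (st m X' Y'))) := by
        exact Finset.sum_congr rfl fun X' _ =>
          Finset.sum_congr rfl fun Y' _ => cellA m X' Y'
    _ = 2 * (X : Polynomial ℤ) * Ap m + ((X : Polynomial ℤ) + 2 * X ^ 2) * Bp m := by
        rw [Ap, Bp, Finset.mul_sum, Finset.mul_sum, ← Finset.sum_add_distrib]
        apply Finset.sum_congr rfl
        intro X' _
        rw [Finset.mul_sum, Finset.mul_sum, ← Finset.sum_add_distrib]
        apply Finset.sum_congr rfl
        intro Y' _
        split_ifs with h <;> ring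

lemma Bp_rec (m : ℕ) : Bp (m+1) = 2 * Ap m + Bp m := by
  rw [Bp]
  rw [sum_pi_succ (m+1) (fun XD => ∑ Y : Fin (m+1) → F,
    if (st (m+1) XD Y).1 = 0 then (X : Polynomial ℤ) ^ (m + 2 - nul (st (m+1) XD Y)) else 0)]
  have hinner : ∀ (x : F) (X' : Fin (m+1) → F),
      (∑ Y : Fin (m+1) → F, if (st (m+1) (Fin.snoc X' x) Y).1 = 0
        then (X : Polynomial ℤ) ^ (m + 2 - nul (st (m+1) (Fin.snoc X' x) Y)) else 0)
      = ∑ y : F, ∑ Y' : Fin m → F,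
          if (stStep (st m X' Y') x y).1 = 0
          then (X : Polynomial ℤ) ^ (m + 2 - nul (stStep (st m X' Y') x y)) else 0 := by
    intro x X'
    rw [sum_pi_succ m (fun Y => if (st (m+1) (Fin.snoc X' x) Y).1 = 0
      then (X : Polynomial ℤ) ^ (m + 2 - nul (st (m+1) (Fin.snoc X' x) Y)) else 0)]
    apply Finset.sum_congr rfl
    intro y _
    apply Finset.sum_congr rfl
    intro Y' _
    rw [st_snoc]
  simp only [hinner]
  rw [Finset.sum_comm]
  have hswap : ∀ X' : Fin (m+1) → F,
      (∑ x : F, ∑ y : F, ∑ Y' : Fin m → F,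
        if (stStep (st m X' Y') x y).1 = 0
        then (X : Polynomial ℤ) ^ (m + 2 - nul (stStep (st m X' Y') x y)) else 0)
      = ∑ Y' : Fin m → F, ∑ x : F, ∑ y : F,
        if (stStep (st m X' Y') x y).1 = 0
        then (X : Polynomial ℤ) ^ (m + 2 - nul (stStep (st m X' Y') x y)) else 0 := by
    intro X'
    trans (∑ x : F, ∑ Y' : Fin m → F, ∑ y : F,
      if (stStep (st m X' Y') x y).1 = 0
      then (X : Polynomial ℤ) ^ (m + 2 - nul (stStep (st m X' Y') x y)) else 0)
    · exact Finset.sum_congr rfl fun x _ => Finset.sum_comm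
    · exact Finset.sum_comm
  calc (∑ X' : Fin (m+1) → F, ∑ x : F, ∑ y : F, ∑ Y' : Fin m → F,
        if (stStep (st m X' Y') x y).1 = 0
        then (X : Polynomial ℤ) ^ (m + 2 - nul (stStep (st m X' Y') x y)) else 0)
      = ∑ X' : Fin (m+1) → F, ∑ Y' : Fin m → F, ∑ x : F, ∑ y : F,
        if (stStep (st m X' Y') x y).1 = 0
        then (X : Polynomial ℤ) ^ (m + 2 - nul (stStep (st m X' Y') x y)) else 0 := by
        exact Finset.sum_congr rfl fun X' _ => hswap X'
    _ = ∑ X' : Fin (m+1) → F, ∑ Y' : Fin m → F,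
        (if (st m X' Y').1 = 0
          then (X : Polynomial ℤ) ^ (m + 1 - nul (st m X' Y'))
          else 2 * (X : Polynomial ℤ) ^ (m + 1 - nul (st m X' Y'))) := by
        exact Finset.sum_congr rfl fun X' _ =>
          Finset.sum_congr rfl fun Y' _ => cellB m X' Y'
    _ = 2 * Ap m + Bp m := by
        rw [Ap, Bp, Finset.mul_sum, ← Finset.sum_add_distrib]
        apply Finset.sum_congr rfl
        intro X' _
        rw [Finset.mul_sum, ← Finset.sum_add_distrib]
        apply Finset.sum_congr rfl
        intro Y' _
        split_ifs with h <;> ring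

lemma Ap0 : Ap 0 = (X : Polynomial ℤ) := by
  rw [Ap, ← Equiv.sum_comp (Equiv.funUnique (Fin 1) F).symm]
  rw [sumF]
  simp [st, nul, Equiv.funUnique]

lemma Bp0 : Bp 0 = 1 := by
  rw [Bp, ← Equiv.sum_comp (Equiv.funUnique (Fin 1) F).symm]
  rw [sumF]
  simp [st, nul, Equiv.funUnique]

end TriAux


/-- For `n ≥ 3`, `ℒ_n(z) = (1 + 2z)·ℒ_{n-1}(z) + 4z²·ℒ_{n-2}(z)`, with
`ℒ_1(z) = 1 + z` and `ℒ_2(z) = 4z² + 3z + 1`. -/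
theorem LPoly_recurrence :
    (∀ n : ℕ, 3 ≤ n → LPoly n = (1 + 2 * X) * LPoly (n - 1) + 4 * X ^ 2 * LPoly (n - 2)) ∧
      LPoly 1 = 1 + X ∧ LPoly 2 = 4 * X ^ 2 + 3 * X + 1 := by
  have h1 : LPoly 1 = 1 + X := by
    rw [TriAux.LPoly_eq 0, TriAux.Ap0, TriAux.Bp0]; ring
  have h2 : LPoly 2 = 4 * X ^ 2 + 3 * X + 1 := by
    rw [TriAux.LPoly_eq 1, TriAux.Ap_rec 0, TriAux.Bp_rec 0, TriAux.Ap0, TriAux.Bp0]; ring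
  refine ⟨?_, h1, h2⟩
  intro n hn
  obtain ⟨m, rfl⟩ : ∃ m, n = m + 3 := ⟨n - 3, by omega⟩
  have e1 : m + 3 - 1 = m + 2 := rfl
  have e2 : m + 3 - 2 = m + 1 := rfl
  rw [e1, e2, show m + 3 = (m + 2) + 1 from rfl, TriAux.LPoly_eq (m+2),
    TriAux.LPoly_eq (m+1), TriAux.LPoly_eq m,
    TriAux.Ap_rec (m+1), TriAux.Bp_rec (m+1), TriAux.Ap_rec m, TriAux.Bp_rec m]
  ring
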